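/- arXiv:2206.00245 — 6 statements merged into one kernel-verified Lean document; each statement's English description precedes it below -/
import Mathlib

section
/- Let k ≥ 2 be an integer and θ > 0. The equation x = ((θ+2)x/(θ+2x))^k has a positive solution x ≠ 1 if and only if θ ≠ 2/(k−1); moreover when θ ≠ 2/(k−1) this positive solution different from 1 is unique. -/
/-!
Substituting `x = (u ^ k)⁻¹` with `u > 0` turns the equation into
`θ u^k + 2 = (θ + 2) u`, i.e. `(u - 1) (θ (u + u² + ⋯ + u^(k-1)) - 2) = 0`.
The second factor is strictly increasing on `[0, ∞)`, negative at `0` and unbounded, so it has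
exactly one positive root `u₀`; the solution `x ≠ 1` exists iff `u₀ ≠ 1`, i.e. iff `θ (k - 1) ≠ 2`.
-/

open Finset

lemma strictMonoOn_sum_pow_succ {m : ℕ} (hm : m ≠ 0) :
    StrictMonoOn (fun u : ℝ => ∑ i ∈ range m, u ^ (i + 1)) (Set.Ici 0) :=
  fun _ ha _ _ hab => sum_lt_sum_of_nonempty (nonempty_range_iff.mpr hm)
    fun i _ => pow_lt_pow_left₀ hab ha i.succ_ne_zero

lemma exists_pos_sum_pow_succ_eq {m : ℕ} (hm : m ≠ 0) {c : ℝ} (hc : 0 < c) :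
    ∃ u, 0 < u ∧ ∑ i ∈ range m, u ^ (i + 1) = c := by
  have hcont : ContinuousOn (fun u : ℝ => ∑ i ∈ range m, u ^ (i + 1)) (Set.Icc 0 c) := by
    fun_prop
  have hc_le : c ≤ ∑ i ∈ range m, c ^ (i + 1) := by
    have h := single_le_sum (f := fun i => c ^ (i + 1)) (fun i _ => by positivity)
      (mem_range.mpr (Nat.pos_of_ne_zero hm))
    simpa using h
  obtain ⟨u, hu, hu_eq⟩ := intermediate_value_Icc hc.le hcont ⟨by simp [hc.le], hc_le⟩
  refine ⟨u, hu.1.lt_of_ne ?_, hu_eq⟩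
  rintro rfl
  simp only [ne_eq, Nat.add_eq_zero_iff, one_ne_zero, and_false, not_false_eq_true, zero_pow,
    sum_const_zero] at hu_eq
  exact hc.ne hu_eq

lemma mul_pow_succ_add_two_sub_eq_mul (θ u : ℝ) (m : ℕ) :
    θ * u ^ (m + 1) + 2 - (θ + 2) * u = (u - 1) * (θ * ∑ i ∈ range m, u ^ (i + 1) - 2) := by
  have hsum : ∑ i ∈ range m, u ^ (i + 1) = u * ∑ i ∈ range m, u ^ i := by
    simp only [mul_sum, pow_succ']
  rw [hsum]
  linear_combination -θ * u * geom_sum_mul u m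

lemma inv_pow_eq_div_pow_iff {θ u : ℝ} (hθ : 0 ≤ θ) (hu : 0 < u) {k : ℕ} (hk : k ≠ 0) :
    (u ^ k)⁻¹ = ((θ + 2) * (u ^ k)⁻¹ / (θ + 2 * (u ^ k)⁻¹)) ^ k ↔
      θ * u ^ k + 2 = (θ + 2) * u := by
  have hD : 0 < θ * u ^ k + 2 := by positivity
  have hrhs : (θ + 2) * (u ^ k)⁻¹ / (θ + 2 * (u ^ k)⁻¹) = (θ + 2) / (θ * u ^ k + 2) := by
    field_simp
  rw [hrhs, ← inv_pow, pow_left_inj₀ (by positivity) (by positivity) hk, eq_div_iff hD.ne',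
    inv_mul_eq_iff_eq_mul₀ hu.ne', mul_comm u]

lemma inv_pow_succ_eq_div_pow_iff_sum_eq {θ u : ℝ} (hθ : 0 < θ) (hu : 0 < u) (hu1 : u ≠ 1)
    (m : ℕ) :
    (u ^ (m + 1))⁻¹ = ((θ + 2) * (u ^ (m + 1))⁻¹ / (θ + 2 * (u ^ (m + 1))⁻¹)) ^ (m + 1) ↔
      ∑ i ∈ range m, u ^ (i + 1) = 2 / θ := by
  rw [inv_pow_eq_div_pow_iff hθ.le hu m.succ_ne_zero, ← sub_eq_zero,
    mul_pow_succ_add_two_sub_eq_mul, mul_eq_zero, or_iff_right (sub_ne_zero.mpr hu1),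
    sub_eq_zero, eq_div_iff hθ.ne', mul_comm]

lemma exists_pos_inv_pow_eq {x : ℝ} (hx : 0 < x) {k : ℕ} (hk : k ≠ 0) :
    ∃ u, 0 < u ∧ (u ^ k)⁻¹ = x :=
  ⟨x⁻¹ ^ (k⁻¹ : ℝ), by positivity, by rw [Real.rpow_inv_natCast_pow (by positivity) hk, inv_inv]⟩

lemma pos_ne_one_solution_iff {θ : ℝ} (hθ : 0 < θ) {m : ℕ} (hm : m ≠ 0) {u₀ : ℝ} (hu₀ : 0 < u₀)
    (hu₀_root : ∑ i ∈ range m, u₀ ^ (i + 1) = 2 / θ) (x : ℝ) :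
    (0 < x ∧ x ≠ 1 ∧ x = ((θ + 2) * x / (θ + 2 * x)) ^ (m + 1)) ↔
      u₀ ≠ 1 ∧ x = (u₀ ^ (m + 1))⁻¹ := by
  have inv_pow_ne_one {u : ℝ} (hu : 0 < u) : (u ^ (m + 1))⁻¹ ≠ 1 ↔ u ≠ 1 := by
    rw [ne_eq, inv_eq_one, pow_eq_one_iff_of_nonneg hu.le m.succ_ne_zero]
  constructor
  · rintro ⟨hx, hx1, hx_eq⟩
    obtain ⟨u, hu, rfl⟩ := exists_pos_inv_pow_eq hx m.succ_ne_zero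
    have hu1 := (inv_pow_ne_one hu).mp hx1
    have hu_root := (inv_pow_succ_eq_div_pow_iff_sum_eq hθ hu hu1 m).mp hx_eq
    obtain rfl : u = u₀ :=
      (strictMonoOn_sum_pow_succ hm).injOn hu.le hu₀.le (hu_root.trans hu₀_root.symm)
    exact ⟨hu1, rfl⟩
  · rintro ⟨hu₀1, rfl⟩
    exact ⟨by positivity, (inv_pow_ne_one hu₀).mpr hu₀1,
      (inv_pow_succ_eq_div_pow_iff_sum_eq hθ hu₀ hu₀1 m).mpr hu₀_root⟩

theorem stmt_2 (k : ℕ) (hk : 2 ≤ k) (θ : ℝ) (hθ : 0 < θ) :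
    ((∃ x : ℝ, 0 < x ∧ x ≠ 1 ∧ x = ((θ + 2) * x / (θ + 2 * x))^k) ↔ θ ≠ 2 / ((k : ℝ) - 1)) ∧
    (θ ≠ 2 / ((k : ℝ) - 1) →
      ∃! x : ℝ, 0 < x ∧ x ≠ 1 ∧ x = ((θ + 2) * x / (θ + 2 * x))^k) := by
  obtain ⟨m, rfl⟩ : ∃ m, k = m + 1 := ⟨k - 1, by omega⟩
  have hm : m ≠ 0 := by omega
  obtain ⟨u₀, hu₀, hu₀_root⟩ := exists_pos_sum_pow_succ_eq hm (div_pos two_pos hθ)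
  have hu₀_eq_one : u₀ = 1 ↔ θ = 2 / (((m + 1 : ℕ) : ℝ) - 1) := by
    have h := (strictMonoOn_sum_pow_succ hm).injOn.eq_iff hu₀.le
      (Set.mem_Ici.mpr zero_le_one : (1 : ℝ) ∈ Set.Ici 0)
    simp only [one_pow, sum_const, card_range, nsmul_eq_mul, mul_one, hu₀_root] at h
    rw [← h, Nat.cast_succ, add_sub_cancel_right, div_eq_iff hθ.ne', eq_div_iff (by positivity),
      eq_comm, mul_comm]
  simp_rw [pos_ne_one_solution_iff hθ hm hu₀ hu₀_root, ne_eq, ← hu₀_eq_one]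
  exact ⟨⟨fun ⟨_, h, _⟩ => h, fun h => ⟨_, h, rfl⟩⟩, fun h => ⟨_, ⟨h, rfl⟩, fun _ hy => hy.2⟩⟩
end

section
/- Let k ≥ 2 be an integer and θ_c = 2(k+1)/(k−1). If 0 < θ < θ_c, then the equation 2τ^k + (2−θ)(τ^{k−1} + ⋯ + τ) + 2 = 0 has no positive real root. -/
/-!
Write `S = τ + ⋯ + τ^(k-1)`, so the equation reads `(θ - 2) S = 2 (τ^k + 1)`.
Pairing `τ^i` with `τ^(k-i)` and using `τ^i + τ^(k-i) ≤ τ^k + 1` gives `2 S ≤ (k - 1)(τ^k + 1)`,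
while `θ < θ_c` means exactly `θ - 2 < 4 / (k - 1)`; hence `(θ - 2) S < 2 (τ^k + 1)` for `τ > 0`.
-/

open Finset

section

variable {R : Type*} [CommRing R] [LinearOrder R] [IsStrictOrderedRing R]

theorem pow_add_pow_le_pow_add_one {x : R} (hx : 0 ≤ x) (a b : ℕ) :
    x ^ a + x ^ b ≤ x ^ (a + b) + 1 := by
  have key : 0 ≤ (x ^ a - 1) * (x ^ b - 1) := by
    rcases le_total x 1 with h | h
    · exact mul_nonneg_of_nonpos_of_nonpos (sub_nonpos.2 (pow_le_one₀ hx h))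
        (sub_nonpos.2 (pow_le_one₀ hx h))
    · exact mul_nonneg (sub_nonneg.2 (one_le_pow₀ h)) (sub_nonneg.2 (one_le_pow₀ h))
  linarith [pow_add x a b]

theorem two_mul_sum_range_pow_succ_le {x : R} (hx : 0 ≤ x) (n : ℕ) :
    2 * ∑ i ∈ range n, x ^ (i + 1) ≤ n * (x ^ (n + 1) + 1) :=
  calc 2 * ∑ i ∈ range n, x ^ (i + 1)
      = ∑ i ∈ range n, (x ^ (i + 1) + x ^ (n - 1 - i + 1)) := by
        rw [sum_add_distrib, sum_range_reflect (fun i => x ^ (i + 1)) n, two_mul]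
    _ ≤ ∑ _i ∈ range n, (x ^ (n + 1) + 1) := sum_le_sum fun i hi => by
        have hexp : i + 1 + (n - 1 - i + 1) = n + 1 := by have := mem_range.1 hi; omega
        simpa only [hexp] using pow_add_pow_le_pow_add_one hx (i + 1) (n - 1 - i + 1)
    _ = n * (x ^ (n + 1) + 1) := by rw [sum_const, card_range, nsmul_eq_mul]

end

theorem stmt_5_general (k : ℕ) (hk : 2 ≤ k) (θ : ℝ)
    (hθc : θ < 2 * ((k : ℝ) + 1) / ((k : ℝ) - 1)) :
    ¬ ∃ τ : ℝ, 0 < τ ∧ 2 * τ^k + (2 - θ) * (∑ i ∈ Finset.range (k-1), τ^(i+1)) + 2 = 0 := by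
  rintro ⟨τ, hτ, heq⟩
  obtain ⟨n, rfl⟩ : ∃ n, k = n + 1 := ⟨k - 1, by omega⟩
  rw [Nat.add_sub_cancel] at heq
  set S := ∑ i ∈ range n, τ ^ (i + 1)
  have hn : (0 : ℝ) < n := by exact_mod_cast (by omega : 0 < n)
  have hS : 0 < S := sum_pos (fun i _ => pow_pos hτ _) ⟨0, mem_range.2 (by omega)⟩
  have hθn : θ - 2 < 4 / n := by
    have θc_eq : 2 * ((↑(n + 1) : ℝ) + 1) / (↑(n + 1) - 1) = 2 + 4 / n := by
      push_cast
      field_simp [hn.ne']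
      ring
    linarith
  have hpair : 4 / n * S ≤ 2 * (τ ^ (n + 1) + 1) := by
    rw [div_mul_eq_mul_div, div_le_iff₀ hn]
    linarith [two_mul_sum_range_pow_succ_le hτ.le n]
  nlinarith [mul_lt_mul_of_pos_right hθn hS]

theorem stmt_5 (k : ℕ) (hk : 2 ≤ k) (θ : ℝ) (hθ : 0 < θ)
    (hθc : θ < 2 * ((k : ℝ) + 1) / ((k : ℝ) - 1)) :
    ¬ ∃ τ : ℝ, 0 < τ ∧ 2 * τ^k + (2 - θ) * (∑ i ∈ Finset.range (k-1), τ^(i+1)) + 2 = 0 :=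
  stmt_5_general k hk θ hθc
end

section
/- Let k ≥ 2 be an integer and θ_c = 2(k+1)/(k−1). If θ = θ_c, then τ = 1 is the unique positive real root of 2τ^k + (2−θ)(τ^{k−1} + ⋯ + τ) + 2 = 0. -/
/-! Substituting `θ = 2(k+1)/(k-1)` turns the equation into
`(k-1)(τ^k + 1) = 2(τ + ⋯ + τ^{k-1})`, which holds at `τ = 1`. Pairing `τ^i` with `τ^{k-i}`,
each pair satisfies `τ^i + τ^{k-i} < τ^k + 1` for `τ ≠ 1`, since
`(τ^i - 1)(τ^{k-i} - 1) > 0`; summing the pairs gives a strict inequality, so `τ = 1` is the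
only positive root. -/

section PowerSums

variable {R : Type*} [CommRing R] [LinearOrder R] [IsStrictOrderedRing R]

theorem pow_add_pow_lt_pow_add_add_one {τ : R} (hτ : 0 ≤ τ) (hne : τ ≠ 1) {m n : ℕ}
    (hm : m ≠ 0) (hn : n ≠ 0) : τ ^ m + τ ^ n < τ ^ (m + n) + 1 := by
  have hprod : 0 < (τ ^ m - 1) * (τ ^ n - 1) := by
    rcases hne.lt_or_gt with h | h
    · exact mul_pos_of_neg_of_neg (sub_neg.2 (pow_lt_one₀ hτ h hm))
        (sub_neg.2 (pow_lt_one₀ hτ h hn))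
    · exact mul_pos (sub_pos.2 (one_lt_pow₀ h hm)) (sub_pos.2 (one_lt_pow₀ h hn))
  rw [pow_add]
  linarith [hprod]

theorem two_mul_sum_range_pow_succ_lt {τ : R} (hτ : 0 ≤ τ) (hne : τ ≠ 1) {n : ℕ}
    (hn : n ≠ 0) : 2 * ∑ i ∈ Finset.range n, τ ^ (i + 1) < n * (τ ^ (n + 1) + 1) := by
  have hreflect :
      ∑ i ∈ Finset.range n, τ ^ (n - i) = ∑ i ∈ Finset.range n, τ ^ (i + 1) := by
    rw [← Finset.sum_range_reflect]
    exact Finset.sum_congr rfl fun i hi => by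
      rw [Finset.mem_range] at hi
      congr 1
      omega
  have hpairs : ∑ i ∈ Finset.range n, (τ ^ (i + 1) + τ ^ (n - i))
      < ∑ i ∈ Finset.range n, (τ ^ (n + 1) + 1) := by
    refine Finset.sum_lt_sum_of_nonempty (Finset.nonempty_range_iff.2 hn) fun i hi => ?_
    rw [Finset.mem_range] at hi
    have hexp : i + 1 + (n - i) = n + 1 := by omega
    simpa only [hexp] using
      pow_add_pow_lt_pow_add_add_one hτ hne (Nat.succ_ne_zero i) (by omega : n - i ≠ 0)
  rw [Finset.sum_add_distrib, hreflect, Finset.sum_const, Finset.card_range, nsmul_eq_mul]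
    at hpairs
  linarith

end PowerSums

theorem stmt_6 (k : ℕ) (hk : 2 ≤ k) (θ : ℝ)
    (hθc : θ = 2 * ((k : ℝ) + 1) / ((k : ℝ) - 1)) :
    (0 < (1:ℝ) ∧ 2 * (1:ℝ)^k + (2 - θ) * (∑ i ∈ Finset.range (k-1), (1:ℝ)^(i+1)) + 2 = 0) ∧
    (∀ τ : ℝ, 0 < τ →
      2 * τ^k + (2 - θ) * (∑ i ∈ Finset.range (k-1), τ^(i+1)) + 2 = 0 → τ = 1) := by
  obtain ⟨n, hn, rfl⟩ : ∃ n, n ≠ 0 ∧ k = n + 1 := ⟨k - 1, by omega, by omega⟩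
  have hθ : 2 - θ = -4 / n := by
    rw [hθc, Nat.cast_add_one, add_sub_cancel_right]
    field_simp
    ring
  have hequiv : ∀ τ : ℝ,
      2 * τ ^ (n + 1) + (2 - θ) * (∑ i ∈ Finset.range n, τ ^ (i + 1)) + 2 = 0
        ↔ 2 * ∑ i ∈ Finset.range n, τ ^ (i + 1) = n * (τ ^ (n + 1) + 1) := fun τ => by
    rw [hθ]
    constructor <;> intro h <;> field_simp at h ⊢ <;> linarith
  simp only [Nat.add_sub_cancel]
  refine ⟨⟨one_pos, (hequiv 1).2 ?_⟩, fun τ hτ hroot => ?_⟩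
  · simp only [one_pow, Finset.sum_const, Finset.card_range, nsmul_eq_mul]
    ring
  by_contra hne
  exact (two_mul_sum_range_pow_succ_lt hτ.le hne hn).ne ((hequiv τ).1 hroot)
end

section
/- Let k ≥ 2 be an integer and θ_c = 2(k+1)/(k−1). If θ > θ_c, then the equation 2τ^k + (2−θ)(τ^{k−1} + ⋯ + τ) + 2 = 0 has exactly two positive real roots, both different from 1, and they are reciprocals of each other. -/
/-!
Write `P(τ) = 2τ^k + (2 - θ)(τ^{k-1} + ⋯ + τ) + 2`. The polynomial is palindromic,
`τ^k P(1/τ) = P(τ)`, so its positive roots come in pairs `τ, 1/τ` and it suffices to show that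
`P` has exactly one root in `(0, 1]`. Existence follows from the intermediate value theorem, since
`P(0) = 2 > 0` while `P(1) = 4 - (θ - 2)(k - 1) < 0` exactly when `θ > 2(k+1)/(k-1)`.
Uniqueness: on `(0, 1]`, `P(τ) = 0` means `(τ^k + 1) / (τ^{k-1} + ⋯ + τ) = (θ - 2) / 2`, and the
left-hand side is strictly decreasing there.
-/

open Finset

noncomputable section

def innerPowSum (k : ℕ) (τ : ℝ) : ℝ := ∑ i ∈ range (k - 1), τ ^ (i + 1)

def palindromicPoly (k : ℕ) (θ τ : ℝ) : ℝ := 2 * τ ^ k + (2 - θ) * innerPowSum k τ + 2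

end

section innerPowSum

variable {k : ℕ}

lemma innerPowSum_pos (hk : 2 ≤ k) {τ : ℝ} (hτ : 0 < τ) : 0 < innerPowSum k τ :=
  sum_pos (fun i _ => pow_pos hτ _) (nonempty_range_iff.mpr (by omega))

lemma pow_mul_innerPowSum_inv {τ : ℝ} (hτ : τ ≠ 0) :
    τ ^ k * innerPowSum k τ⁻¹ = innerPowSum k τ := by
  rw [innerPowSum, innerPowSum, mul_sum, ← sum_range_reflect (fun i => τ ^ (i + 1))]
  refine sum_congr rfl fun i hi => ?_
  have hsplit : τ ^ k = τ ^ (k - 1 - 1 - i + 1) * τ ^ (i + 1) := by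
    rw [← pow_add]; congr 1; rw [mem_range] at hi; omega
  rw [hsplit, inv_pow, mul_assoc, mul_inv_cancel₀ (pow_ne_zero _ hτ), mul_one]

/-- Pairing the exponents `e` and `k - e` turns each pair of terms of the difference into
`(b^e - a^e)(1 - (ab)^{k-e}) + (b^{k-e} - a^{k-e})(1 - (ab)^e) > 0`. -/
lemma pow_add_one_mul_innerPowSum_lt (hk : 2 ≤ k) {a b : ℝ} (ha : 0 < a) (hab : a < b)
    (hb : b ≤ 1) : (b ^ k + 1) * innerPowSum k a < (a ^ k + 1) * innerPowSum k b := by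
  set T : ℕ → ℝ := fun e => (a ^ k + 1) * b ^ e - (b ^ k + 1) * a ^ e
  have hab1 : a * b < 1 := by nlinarith
  have hpair : ∀ i ∈ range (k - 1), 0 < T (i + 1) + T (k - 1 - i) := by
    intro i hi
    rw [mem_range] at hi
    have hsplit : ∀ e m : ℕ, e + m = k →
        T e + T m = (b ^ e - a ^ e) * (1 - (a * b) ^ m) + (b ^ m - a ^ m) * (1 - (a * b) ^ e) := by
      rintro e m rfl
      simp only [T, pow_add, mul_pow]
      ring
    have hpow_sub (e : ℕ) (he : e ≠ 0) : 0 < b ^ e - a ^ e :=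
      sub_pos.mpr (pow_lt_pow_left₀ hab ha.le he)
    have hprod (e : ℕ) (he : e ≠ 0) : 0 < 1 - (a * b) ^ e :=
      sub_pos.mpr (pow_lt_one₀ (mul_pos ha (ha.trans hab)).le hab1 he)
    rw [hsplit (i + 1) (k - 1 - i) (by omega)]
    exact add_pos (mul_pos (hpow_sub _ (by omega)) (hprod _ (by omega)))
      (mul_pos (hpow_sub _ (by omega)) (hprod _ (by omega)))
  have hreflect : ∑ i ∈ range (k - 1), T (k - 1 - i) = ∑ i ∈ range (k - 1), T (i + 1) := by
    rw [← sum_range_reflect (fun i => T (i + 1))]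
    refine sum_congr rfl fun i hi => ?_
    rw [mem_range] at hi
    congr 1
    omega
  have hsum : 0 < ∑ i ∈ range (k - 1), T (i + 1) := by
    have := sum_pos hpair (nonempty_range_iff.mpr (by omega))
    rw [sum_add_distrib, hreflect] at this
    linarith
  simp only [T, sum_sub_distrib, ← mul_sum] at hsum
  exact sub_pos.mp hsum

lemma strictAntiOn_pow_add_one_div_innerPowSum (hk : 2 ≤ k) :
    StrictAntiOn (fun τ => (τ ^ k + 1) / innerPowSum k τ) (Set.Ioc 0 1) := by
  rintro a ⟨ha, -⟩ b ⟨hb, hb1⟩ hab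
  rw [div_lt_div_iff₀ (innerPowSum_pos hk hb) (innerPowSum_pos hk ha)]
  exact pow_add_one_mul_innerPowSum_lt hk ha hab hb1

end innerPowSum

section palindromicPoly

variable {k : ℕ} {θ : ℝ}

lemma pow_mul_palindromicPoly_inv {τ : ℝ} (hτ : τ ≠ 0) :
    τ ^ k * palindromicPoly k θ τ⁻¹ = palindromicPoly k θ τ := by
  have hk : τ ^ k * τ⁻¹ ^ k = 1 := by rw [← mul_pow, mul_inv_cancel₀ hτ, one_pow]
  rw [palindromicPoly, palindromicPoly, ← pow_mul_innerPowSum_inv hτ]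
  linear_combination 2 * hk

lemma palindromicPoly_inv_eq_zero_iff {τ : ℝ} (hτ : τ ≠ 0) :
    palindromicPoly k θ τ⁻¹ = 0 ↔ palindromicPoly k θ τ = 0 := by
  rw [← pow_mul_palindromicPoly_inv hτ, mul_eq_zero, or_iff_right (pow_ne_zero k hτ)]

lemma palindromicPoly_eq_zero_iff (hk : 2 ≤ k) {τ : ℝ} (hτ : 0 < τ) :
    palindromicPoly k θ τ = 0 ↔ (τ ^ k + 1) / innerPowSum k τ = (θ - 2) / 2 := by
  rw [div_eq_div_iff (innerPowSum_pos hk hτ).ne' two_ne_zero, palindromicPoly]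
  constructor <;> intro h <;> linarith

lemma eq_of_palindromicPoly_eq_zero (hk : 2 ≤ k) {a b : ℝ}
    (ha : a ∈ Set.Ioc 0 1) (hb : b ∈ Set.Ioc 0 1)
    (hPa : palindromicPoly k θ a = 0) (hPb : palindromicPoly k θ b = 0) : a = b := by
  rw [palindromicPoly_eq_zero_iff hk ha.1] at hPa
  rw [palindromicPoly_eq_zero_iff hk hb.1] at hPb
  exact (strictAntiOn_pow_add_one_div_innerPowSum hk).injOn ha hb (hPa.trans hPb.symm)

lemma palindromicPoly_zero (hk : k ≠ 0) : palindromicPoly k θ 0 = 2 := by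
  simp [palindromicPoly, innerPowSum, zero_pow hk]

lemma palindromicPoly_one (hk : 1 ≤ k) : palindromicPoly k θ 1 = 4 + (2 - θ) * ((k : ℝ) - 1) := by
  simp [palindromicPoly, innerPowSum, Nat.cast_sub hk]
  ring

lemma continuous_palindromicPoly : Continuous (palindromicPoly k θ) := by
  unfold palindromicPoly innerPowSum
  fun_prop

lemma exists_palindromicPoly_eq_zero_mem_Ioo (hk : 2 ≤ k)
    (hθ : 2 * ((k : ℝ) + 1) / ((k : ℝ) - 1) < θ) :
    ∃ c ∈ Set.Ioo 0 1, palindromicPoly k θ c = 0 := by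
  have hk1 : (0 : ℝ) < (k : ℝ) - 1 := by
    have : (2 : ℝ) ≤ k := by exact_mod_cast hk
    linarith
  rw [div_lt_iff₀ hk1] at hθ
  have h0 : palindromicPoly k θ 0 = 2 := palindromicPoly_zero (by omega)
  have h1 : palindromicPoly k θ 1 < 0 := by
    rw [palindromicPoly_one (by omega)]
    linarith
  have h0_mem : (0 : ℝ) ∈ Set.Icc (palindromicPoly k θ 1) (palindromicPoly k θ 0) := by
    rw [h0]; exact ⟨h1.le, zero_le_two⟩
  obtain ⟨c, ⟨hc0, hc1⟩, hc⟩ :=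
    intermediate_value_Icc' zero_le_one continuous_palindromicPoly.continuousOn h0_mem
  refine ⟨c, ⟨hc0.lt_of_ne ?_, hc1.lt_of_ne ?_⟩, hc⟩ <;> rintro rfl
  · rw [h0] at hc; exact two_ne_zero hc
  · rw [hc] at h1; exact h1.false

end palindromicPoly

theorem stmt_7 (k : ℕ) (hk : 2 ≤ k) (θ : ℝ)
    (hθc : 2 * ((k : ℝ) + 1) / ((k : ℝ) - 1) < θ) :
    ∃ τ₁ τ₂ : ℝ, 0 < τ₁ ∧ 0 < τ₂ ∧ τ₁ ≠ τ₂ ∧ τ₁ ≠ 1 ∧ τ₂ ≠ 1 ∧ τ₂ = 1 / τ₁ ∧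
      (2 * τ₁^k + (2 - θ) * (∑ i ∈ Finset.range (k-1), τ₁^(i+1)) + 2 = 0) ∧
      (2 * τ₂^k + (2 - θ) * (∑ i ∈ Finset.range (k-1), τ₂^(i+1)) + 2 = 0) ∧
      (∀ τ : ℝ, 0 < τ →
        2 * τ^k + (2 - θ) * (∑ i ∈ Finset.range (k-1), τ^(i+1)) + 2 = 0 → τ = τ₁ ∨ τ = τ₂) := by
  obtain ⟨c, ⟨hc0, hc1⟩, hc⟩ := exists_palindromicPoly_eq_zero_mem_Ioo hk hθc
  have hc_inv : palindromicPoly k θ c⁻¹ = 0 := (palindromicPoly_inv_eq_zero_iff hc0.ne').mpr hc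
  have hc_mem : c ∈ Set.Ioc 0 1 := ⟨hc0, hc1.le⟩
  have hc_inv_gt : 1 < c⁻¹ := one_lt_inv₀ hc0 |>.mpr hc1
  refine ⟨c, c⁻¹, hc0, by positivity, (hc1.trans hc_inv_gt).ne, hc1.ne, hc_inv_gt.ne',
    (one_div c).symm, hc, hc_inv, fun τ hτ hPτ => ?_⟩
  rcases le_or_gt τ 1 with hτ1 | hτ1
  · exact .inl (eq_of_palindromicPoly_eq_zero hk ⟨hτ, hτ1⟩ hc_mem hPτ hc)
  · have hτ_inv : τ⁻¹ ∈ Set.Ioc 0 1 := ⟨inv_pos.mpr hτ, inv_le_one_of_one_le₀ hτ1.le⟩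
    have hPτ_inv : palindromicPoly k θ τ⁻¹ = 0 := (palindromicPoly_inv_eq_zero_iff hτ.ne').mpr hPτ
    exact .inr (inv_eq_iff_eq_inv.mp (eq_of_palindromicPoly_eq_zero hk hτ_inv hc_mem hPτ_inv hc))
end

section
/- Let φ₁(θ) = (θ^2 − 2θ + √(θ(θ^3 − 4θ^2 + 16)))/2. Then the discriminant D₁(θ) = φ₁(θ)^2 − 16/θ^2 of the quadratic x^2 − φ₁(θ)x + 4/θ^2 = 0 is nonnegative if and only if θ ≥ 2. -/
/-! With `s = √(θ (θ³ - 4θ² + 16))` and `g = θ (θ² - 2θ + s) = 2θ φ₁(θ)`, the discriminant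
is `(g - 8)(g + 8) / (4θ²)`. Since `θ³ - 2θ² + 8 > 0` for `θ ≥ 0`, always `g + 8 > 0`, so
`D₁ ≥ 0` iff `8 - θ³ + 2θ² ≤ θ s`. When the left side is positive one may square, and
`(θ s)² - (8 - θ³ + 2θ²)² = 4 (θ - 2)(8 + 4θ + 6θ² - θ³)`, whose second factor is then
positive. -/

open Real

lemma cubic_radicand_pos {θ : ℝ} (hθ : 0 ≤ θ) : 0 < θ ^ 3 - 4 * θ ^ 2 + 16 := by
  nlinarith [mul_nonneg hθ (sq_nonneg (3 * θ - 8)), sq_nonneg (θ - 8 / 3)]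

lemma cube_sub_two_mul_sq_add_eight_pos {θ : ℝ} (hθ : 0 ≤ θ) : 0 < θ ^ 3 - 2 * θ ^ 2 + 8 := by
  nlinarith [mul_nonneg hθ (sq_nonneg (θ - 4 / 3)), sq_nonneg (θ - 4 / 3)]

lemma le_mul_sqrt_radicand_iff {θ : ℝ} (hθ : 0 < θ) :
    8 - θ ^ 3 + 2 * θ ^ 2 ≤ θ * √(θ * (θ ^ 3 - 4 * θ ^ 2 + 16)) ↔ 2 ≤ θ := by
  set s := √(θ * (θ ^ 3 - 4 * θ ^ 2 + 16))
  have hs : 0 ≤ s := sqrt_nonneg _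
  have hθs : 0 ≤ θ * s := mul_nonneg hθ.le hs
  rcases le_or_gt (8 - θ ^ 3 + 2 * θ ^ 2) 0 with hR | hR
  · refine iff_of_true (hR.trans hθs) ?_
    nlinarith [sq_nonneg θ]
  · have hs_sq : s ^ 2 = θ * (θ ^ 3 - 4 * θ ^ 2 + 16) :=
      sq_sqrt (mul_nonneg hθ.le (cubic_radicand_pos hθ.le).le)
    have hdiff : (θ * s) ^ 2 - (8 - θ ^ 3 + 2 * θ ^ 2) ^ 2
        = (θ - 2) * (4 * (8 + 4 * θ + 6 * θ ^ 2 - θ ^ 3)) := by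
      rw [mul_pow, hs_sq]; ring
    have hfactor : 0 < 4 * (8 + 4 * θ + 6 * θ ^ 2 - θ ^ 3) := by nlinarith
    rw [← pow_le_pow_iff_left₀ hR.le hθs two_ne_zero, ← sub_nonneg, hdiff,
      mul_nonneg_iff_of_pos_right hfactor, sub_nonneg]

theorem stmt_12 (θ : ℝ) (hθ : 0 < θ) :
    0 ≤ ((θ^2 - 2*θ + Real.sqrt (θ * (θ^3 - 4*θ^2 + 16))) / 2)^2 - 16 / θ^2 ↔ 2 ≤ θ := by
  set s := √(θ * (θ ^ 3 - 4 * θ ^ 2 + 16))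
  set g := θ * (θ ^ 2 - 2 * θ + s)
  have hD :
      ((θ ^ 2 - 2 * θ + s) / 2) ^ 2 - 16 / θ ^ 2 = (g - 8) * (g + 8) / (4 * θ ^ 2) := by
    field_simp
    ring
  have hg : 0 < g + 8 := by
    nlinarith [cube_sub_two_mul_sq_add_eight_pos hθ.le, mul_nonneg hθ.le (sqrt_nonneg _ : 0 ≤ s)]
  rw [hD, le_div_iff₀ (by positivity), zero_mul, mul_nonneg_iff_of_pos_right hg, sub_nonneg,
    ← le_mul_sqrt_radicand_iff hθ]
  constructor <;> intro h <;> linarith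
end

section
/- If (x, y) with x, y > 0 and x ≠ y satisfies the system x = ((θx+2)/(θ+x+y))^2 and y = ((θy+2)/(θ+x+y))^2, then (θ + x + y)^2 = θ(θ(x+y) + 4), and hence x + y equals (θ^2 − 2θ ± √(θ(θ^3 − 4θ^2 + 16)))/2. -/
/-!
Clearing denominators, `x D² = (θx + 2)²` and `y D² = (θy + 2)²` with `D = θ + x + y`.
Subtracting, `(x - y) D² = θ (x - y) (θ (x + y) + 4)`, and cancelling `x - y ≠ 0` gives the
relation for `D²`. Read as a quadratic equation in `s = x + y`, it is
`s² + (2θ - θ²) s + θ² - 4θ = 0`, whose discriminant is `θ (θ³ - 4θ² + 16)`.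
-/

lemma mul_sq_eq_sq_of_eq_div_sq {K : Type*} [Field K] {x u D : K} (hD : D ≠ 0)
    (h : x = (u / D) ^ 2) : x * D ^ 2 = u ^ 2 := by
  rw [h, div_pow, div_mul_cancel₀ _ (pow_ne_zero 2 hD)]

lemma sq_add_add_eq_of_fixed_point_pair {R : Type*} [CommRing R] [IsDomain R] {θ x y : R}
    (hxy : x ≠ y) (hx : x * (θ + x + y) ^ 2 = (θ * x + 2) ^ 2)
    (hy : y * (θ + x + y) ^ 2 = (θ * y + 2) ^ 2) :
    (θ + x + y) ^ 2 = θ * (θ * (x + y) + 4) := by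
  have hdiff : (x - y) * (θ + x + y) ^ 2 = (x - y) * (θ * (θ * (x + y) + 4)) := by
    linear_combination hx - hy
  exact mul_left_cancel₀ (sub_ne_zero.mpr hxy) hdiff

lemma eq_roots_of_sq_add_eq {θ s : ℝ} (h : (θ + s) ^ 2 = θ * (θ * s + 4)) :
    s = (θ ^ 2 - 2 * θ + √(θ * (θ ^ 3 - 4 * θ ^ 2 + 16))) / 2 ∨
    s = (θ ^ 2 - 2 * θ - √(θ * (θ ^ 3 - 4 * θ ^ 2 + 16))) / 2 := by
  have hquad : 1 * (s * s) + (2 * θ - θ ^ 2) * s + (θ ^ 2 - 4 * θ) = 0 := by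
    linear_combination h
  have hdiscrim : discrim 1 (2 * θ - θ ^ 2) (θ ^ 2 - 4 * θ) = θ * (θ ^ 3 - 4 * θ ^ 2 + 16) := by
    unfold discrim; ring
  have hnonneg : 0 ≤ θ * (θ ^ 3 - 4 * θ ^ 2 + 16) := by
    rw [← hdiscrim, discrim_eq_sq_of_quadratic_eq_zero hquad]
    positivity
  rw [← Real.mul_self_sqrt hnonneg] at hdiscrim
  have := (quadratic_eq_zero_iff one_ne_zero hdiscrim s).mp hquad
  convert this using 2 <;> ring

theorem stmt_14 (θ x y : ℝ) (hθ : 0 < θ) (hx : 0 < x) (hy : 0 < y) (hxy : x ≠ y)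
    (h1 : x = ((θ*x + 2) / (θ + x + y))^2) (h2 : y = ((θ*y + 2) / (θ + x + y))^2) :
    (θ + x + y)^2 = θ * (θ * (x + y) + 4) ∧
    (x + y = (θ^2 - 2*θ + Real.sqrt (θ * (θ^3 - 4*θ^2 + 16))) / 2 ∨
     x + y = (θ^2 - 2*θ - Real.sqrt (θ * (θ^3 - 4*θ^2 + 16))) / 2) := by
  have hD : θ + x + y ≠ 0 := by positivity
  have key : (θ + x + y) ^ 2 = θ * (θ * (x + y) + 4) :=
    sq_add_add_eq_of_fixed_point_pair hxy (mul_sq_eq_sq_of_eq_div_sq hD h1)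
      (mul_sq_eq_sq_of_eq_div_sq hD h2)
  exact ⟨key, eq_roots_of_sq_add_eq (by rwa [← add_assoc])⟩
end
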